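/- Let p be a prime and A a ℤ/pℤ-graded commutative ring with components A_i such that A_0 is a local ring and A_1^p = A_0. Then there exists an element b ∈ A_1 which is a unit of A such that A_i = b^i·A_0 for each i = 0, 1, …, p−1; consequently a := b^p is a unit of A_0, and A is isomorphic as an A_0-algebra to A_0[t]/(t^p − a). -/

import Mathlib

section GradedSetup

variable {A : Type*} [CommRing A] {p : ℕ}
variable (𝒜 : ZMod p → Submodule ℤ A) [GradedRing 𝒜]

/-- The inclusion of the degree-zero subring `𝒜 0` into `A`, as a ring homomorphism. -/
def gradeZeroInclusion : (𝒜 (0 : ZMod p)) →+* A where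
  toFun x := x
  map_one' := rfl
  map_mul' _ _ := rfl
  map_zero' := rfl
  map_add' _ _ := rfl

/-- `A` is an algebra over its degree-zero subring `𝒜 0`. -/
noncomputable instance : Algebra (𝒜 (0 : ZMod p)) A := (gradeZeroInclusion 𝒜).toAlgebra

end GradedSetup

/-!
Since `1 ∈ 𝒜 1 ^ p ⊆ 𝒜 1 * 𝒜 (-1)` and `𝒜 0` is local, some product `m * n` with `m ∈ 𝒜 1`,
`n ∈ 𝒜 (-1)` is a unit of `𝒜 0`; then `b := m` is a unit of `A` with inverse in `𝒜 (-1)`.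
Multiplication by `b ^ i` then identifies `𝒜 0` with `𝒜 i`, hence evaluation at `b` maps
`𝒜 0[X]` onto `A`; and as the terms `r i * b ^ i` of `f(b)` for `i < p` lie in distinct degrees,
a polynomial of degree `< p` vanishing at `b` is zero, so the kernel is `(X ^ p - b ^ p)`.
-/

open Polynomial

namespace Polynomial

variable {R S : Type*} [CommRing R] [Ring S] [Algebra R S]

theorem ker_aeval_eq_span_singleton_of_monic {g : R[X]} (hg : g.Monic) {b : S}
    (hgb : aeval b g = 0) (hind : ∀ f : R[X], f.degree < g.degree → aeval b f = 0 → f = 0) :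
    RingHom.ker (aeval b) = Ideal.span {g} := by
  refine le_antisymm (fun f hf => ?_) (by simpa [Ideal.span_le] using hgb)
  nontriviality R
  have hmod : f %ₘ g = 0 := hind _ (degree_modByMonic_lt f hg) <| by
    rwa [aeval_modByMonic_eq_self_of_root hgb]
  exact Ideal.mem_span_singleton.mpr ((modByMonic_eq_zero_iff_dvd hg).mp hmod)

theorem nonempty_algEquiv_quotient_span_of_monic {g : R[X]} (hg : g.Monic) {b : S}
    (hgb : aeval b g = 0) (hind : ∀ f : R[X], f.degree < g.degree → aeval b f = 0 → f = 0)
    (hsurj : Function.Surjective (aeval (R := R) b)) :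
    Nonempty (S ≃ₐ[R] R[X] ⧸ Ideal.span {g}) :=
  ⟨(Ideal.quotientKerAlgEquivOfSurjective hsurj).symm.trans
    (Ideal.quotientEquivAlgOfEq R (ker_aeval_eq_span_singleton_of_monic hg hgb hind))⟩

end Polynomial

section GradedMonoid

variable {ι A : Type*} [AddCommMonoid ι] [CommRing A] (𝒜 : ι → Submodule ℤ A)
  [SetLike.GradedMonoid 𝒜]

theorem Submodule.pow_le_grade_nsmul (i : ι) (k : ℕ) : 𝒜 i ^ k ≤ 𝒜 (k • i) := by
  induction k with
  | zero => simpa [Submodule.one_eq_span] using SetLike.one_mem_graded 𝒜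
  | succ k ih =>
    rw [pow_succ, succ_nsmul, Submodule.mul_le]
    exact fun x hx y hy => SetLike.mul_mem_graded (ih hx) hy

variable {𝒜}

theorem mem_grade_iff_exists_eq_mul_of_mul_eq_one {b c : A} {i j : ι} (hb : b ∈ 𝒜 i)
    (hc : c ∈ 𝒜 j) (hij : i + j = 0) (hbc : b * c = 1) {x : A} :
    x ∈ 𝒜 i ↔ ∃ r ∈ 𝒜 0, x = b * r := by
  refine ⟨fun hx => ⟨c * x, ?_, by rw [← mul_assoc, hbc, one_mul]⟩, ?_⟩
  · simpa [add_comm j, hij] using SetLike.mul_mem_graded hc hx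
  · rintro ⟨r, hr, rfl⟩
    simpa using SetLike.mul_mem_graded hb hr

theorem mem_grade_nsmul_iff_exists_eq_pow_mul {b c : A} {i j : ι} (hb : b ∈ 𝒜 i)
    (hc : c ∈ 𝒜 j) (hij : i + j = 0) (hbc : b * c = 1) (k : ℕ) {x : A} :
    x ∈ 𝒜 (k • i) ↔ ∃ r ∈ 𝒜 0, x = b ^ k * r :=
  mem_grade_iff_exists_eq_mul_of_mul_eq_one (SetLike.pow_mem_graded k hb)
    (SetLike.pow_mem_graded k hc) (by rw [← nsmul_add, hij, nsmul_zero])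
    (by rw [← mul_pow, hbc, one_pow])

end GradedMonoid

section GradedRing

variable {ι A : Type*} [DecidableEq ι] [AddCommMonoid ι] [CommRing A]
  {𝒜 : ι → Submodule ℤ A} [GradedRing 𝒜]

theorem exists_mul_eq_one_of_one_mem_mul [IsLocalRing (𝒜 0)] {i j : ι} (hij : i + j = 0)
    (h1 : (1 : A) ∈ 𝒜 i * 𝒜 j) : ∃ b ∈ 𝒜 i, ∃ c ∈ 𝒜 j, b * c = 1 := by
  have hmul : ∀ {m n : A}, m ∈ 𝒜 i → n ∈ 𝒜 j → m * n ∈ 𝒜 0 := fun hm hn => by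
    simpa [hij] using SetLike.mul_mem_graded hm hn
  obtain ⟨m, hm, n, hn, hu⟩ : ∃ m, ∃ hm : m ∈ 𝒜 i, ∃ n, ∃ hn : n ∈ 𝒜 j,
      IsUnit (⟨m * n, hmul hm hn⟩ : 𝒜 0) := by
    by_contra! hnon
    let 𝔪 : Submodule ℤ A := AddSubgroup.toIntSubmodule <|
      (IsLocalRing.maximalIdeal (𝒜 0)).toAddSubgroup.map (𝒜 0).subtype.toAddMonoidHom
    have h𝔪 : 𝒜 i * 𝒜 j ≤ 𝔪 := Submodule.mul_le.mpr fun m hm n hn =>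
      ⟨_, (IsLocalRing.mem_maximalIdeal _).mpr (hnon m hm n hn), rfl⟩
    obtain ⟨u, hu, hu1⟩ := h𝔪 h1
    have hu_one : u = 1 := Subtype.ext hu1
    exact (IsLocalRing.mem_maximalIdeal _).mp hu (hu_one ▸ isUnit_one)
  obtain ⟨v, hv⟩ := hu.exists_right_inv
  refine ⟨m, hm, n * v, by simpa using SetLike.mul_mem_graded hn v.2, ?_⟩
  rw [← mul_assoc]
  exact congrArg Subtype.val hv

end GradedRing

section DirectSum

variable {ι κ M : Type*} [DecidableEq ι] [AddCommGroup M] {ℳ : ι → Submodule ℤ M}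
  [DirectSum.Decomposition ℳ]

theorem eq_zero_of_sum_eq_zero_of_injOn {s : Finset κ} {deg : κ → ι}
    (hdeg : Set.InjOn deg s) {y : κ → M} (hy : ∀ k ∈ s, y k ∈ ℳ (deg k))
    (hsum : ∑ k ∈ s, y k = 0) : ∀ k ∈ s, y k = 0 := by
  intro j hj
  have := congrArg (fun x => (DirectSum.decompose ℳ x (deg j) : M)) hsum
  rw [DirectSum.decompose_sum, DFinsupp.finsetSum_apply, Submodule.coe_sum,
    Finset.sum_eq_single_of_mem j hj, DirectSum.decompose_of_mem_same ℳ (hy j hj)] at this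
  · simpa using this
  · intro k hk hkj
    exact DirectSum.decompose_of_mem_ne ℳ (hy k hk) (hdeg.ne hk hj hkj)

end DirectSum

theorem mem_natCast_iff_exists_eq_pow_mul {ι A : Type*} [AddCommGroupWithOne ι] [CommRing A]
    {𝒜 : ι → Submodule ℤ A} [SetLike.GradedMonoid 𝒜] {b c : A} (hb : b ∈ 𝒜 1)
    (hc : c ∈ 𝒜 (-1)) (hbc : b * c = 1) (k : ℕ) {x : A} :
    x ∈ 𝒜 (k : ι) ↔ ∃ r ∈ 𝒜 0, x = b ^ k * r := by
  rw [← nsmul_one]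
  exact mem_grade_nsmul_iff_exists_eq_pow_mul hb hc (add_neg_cancel 1) hbc k

section ZModGrading

variable {A : Type*} [CommRing A] {p : ℕ} {𝒜 : ZMod p → Submodule ℤ A} [GradedRing 𝒜] {b : A}

@[simp]
theorem gradeZero_algebraMap_apply (r : 𝒜 0) : algebraMap (𝒜 0) A r = r := rfl

theorem aeval_surjective_of_mul_eq_one [NeZero p] {c : A} (hb : b ∈ 𝒜 1) (hc : c ∈ 𝒜 (-1))
    (hbc : b * c = 1) :
    Function.Surjective (aeval (R := 𝒜 0) b) := by
  intro x
  induction x using DirectSum.Decomposition.inductionOn 𝒜 with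
  | zero => exact ⟨0, map_zero _⟩
  | @homogeneous i m =>
    obtain ⟨r, hr, hmr⟩ := (mem_natCast_iff_exists_eq_pow_mul hb hc hbc i.val).mp
      (by simpa only [ZMod.natCast_zmod_val] using m.2)
    exact ⟨C ⟨r, hr⟩ * X ^ i.val, by
      rw [map_mul, aeval_C, aeval_X_pow, gradeZero_algebraMap_apply, hmr, mul_comm]⟩
  | add x y hx hy =>
    obtain ⟨f, rfl⟩ := hx
    obtain ⟨g, rfl⟩ := hy
    exact ⟨f + g, map_add _ f g⟩

theorem eq_zero_of_aeval_eq_zero_of_degree_lt (hb : b ∈ 𝒜 1) (hbu : IsUnit b) {f : (𝒜 0)[X]}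
    (hf : f.degree < p) (hfb : aeval b f = 0) : f = 0 := by
  by_contra hf0
  have hdeg : f.natDegree < p := (natDegree_lt_iff_degree_lt hf0).mpr hf
  have hinj : Set.InjOn (Nat.cast : ℕ → ZMod p) (Finset.range p) := fun k hk l hl hkl => by
    rw [Finset.coe_range, Set.mem_Iio] at hk hl
    rw [← ZMod.val_cast_of_lt hk, ← ZMod.val_cast_of_lt hl, hkl]
  have hterms : ∀ k ∈ Finset.range p, (f.coeff k : A) * b ^ k = 0 := by
    refine eq_zero_of_sum_eq_zero_of_injOn (ℳ := 𝒜) hinj (fun k _ => ?_) ?_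
    · simpa using SetLike.mul_mem_graded (f.coeff k).2 (SetLike.pow_mem_graded k hb)
    · simpa [aeval_eq_sum_range' hdeg, Algebra.smul_def] using hfb
  refine hf0 (ext fun k => ?_)
  rcases lt_or_ge k p with hk | hk
  · exact Subtype.ext <| (hbu.pow k).mul_left_eq_zero.mp (hterms k (Finset.mem_range.mpr hk))
  · exact coeff_eq_zero_of_natDegree_lt (hdeg.trans_le hk)

end ZModGrading

/-- If `A` is a `ℤ/pℤ`-graded commutative ring with `𝒜 0` local and `(𝒜 1)^p = 𝒜 0`, then
there is a unit `b ∈ 𝒜 1` of `A` with `𝒜 i = b^i · 𝒜 0` for `i = 0, 1, …, p-1`; consequently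
`a := b^p` is a unit of `𝒜 0` and `A ≅ 𝒜 0[t]/(t^p - a)` as an `𝒜 0`-algebra. -/
theorem graded_local_ring_structure
    {A : Type*} [CommRing A] {p : ℕ} (hp : p.Prime)
    (𝒜 : ZMod p → Submodule ℤ A) [GradedRing 𝒜]
    (hloc : IsLocalRing (𝒜 (0 : ZMod p)))
    (h : 𝒜 (1 : ZMod p) ^ p = 𝒜 (0 : ZMod p)) :
    ∃ b ∈ 𝒜 (1 : ZMod p), IsUnit b ∧
      (∀ i : ℕ, i ≤ p - 1 →
        ∀ x : A, x ∈ 𝒜 (i : ZMod p) ↔ ∃ r ∈ 𝒜 (0 : ZMod p), x = b ^ i * r) ∧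
      ∃ hb : b ^ p ∈ 𝒜 (0 : ZMod p),
        IsUnit (⟨b ^ p, hb⟩ : 𝒜 (0 : ZMod p)) ∧
        Nonempty (A ≃ₐ[𝒜 (0 : ZMod p)]
          (Polynomial (𝒜 (0 : ZMod p)) ⧸
            Ideal.span {(Polynomial.X : Polynomial (𝒜 (0 : ZMod p))) ^ p
              - Polynomial.C (⟨b ^ p, hb⟩ : 𝒜 (0 : ZMod p))})) := by
  have : NeZero p := ⟨hp.ne_zero⟩
  have h1 : (1 : A) ∈ 𝒜 1 * 𝒜 (-1) := by
    have hpred : (p - 1) • (1 : ZMod p) = -1 := by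
      rw [nsmul_one, Nat.cast_pred hp.pos, ZMod.natCast_self, zero_sub]
    have hle : 𝒜 1 ^ p ≤ 𝒜 1 * 𝒜 (-1) := calc
      𝒜 1 ^ p = 𝒜 1 * 𝒜 1 ^ (p - 1) := by rw [← pow_succ', Nat.sub_add_cancel hp.one_le]
      _ ≤ 𝒜 1 * 𝒜 (-1) := by
        rw [← hpred]; exact mul_le_mul' le_rfl (Submodule.pow_le_grade_nsmul 𝒜 1 (p - 1))
    exact hle (h ▸ SetLike.one_mem_graded 𝒜)
  obtain ⟨b, hb, c, hc, hbc⟩ := exists_mul_eq_one_of_one_mem_mul (add_neg_cancel 1) h1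
  have hbu : IsUnit b := .of_mul_eq_one c hbc
  have hbp : b ^ p ∈ 𝒜 0 := by simpa using SetLike.pow_mem_graded p hb
  have hcp : c ^ p ∈ 𝒜 0 := by simpa using SetLike.pow_mem_graded p hc
  refine ⟨b, hb, hbu, fun i _ x => mem_natCast_iff_exists_eq_pow_mul hb hc hbc i, hbp,
    .of_mul_eq_one ⟨c ^ p, hcp⟩ (Subtype.ext (by simp [← mul_pow, hbc])), ?_⟩
  refine nonempty_algEquiv_quotient_span_of_monic (monic_X_pow_sub_C _ hp.ne_zero) (by simp)
    (fun f hf => eq_zero_of_aeval_eq_zero_of_degree_lt hb hbu ?_)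
    (aeval_surjective_of_mul_eq_one hb hc hbc)
  rwa [degree_X_pow_sub_C hp.pos] at hf
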